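/- arXiv:2402.02615 — 2 statements merged into one kernel-verified Lean document; each statement's English description precedes it below -/
import Mathlib

section
/- For every finite region \Lambda in \Lambda_\infty and any ground state #, the deviation of the number of ground-state particles in \Lambda from \rho_max |\Lambda| is a boundary term: | |\Lambda \cap \mathcal{L}^#| - \rho_max |\Lambda| | <= \mu^{-1} |\partial^in \Lambda|, where \partial^in \Lambda = { \lambda \in \Lambda : d(\lambda, \Lambda^c) = 1 }. In particular, for two ground states #, #', | |\Lambda \cap \mathcal{L}^#| - |\Lambda \cap \mathcal{L}^{#'}| | <= 2 \mu^{-1} |\partial^in \Lambda|. -/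
/-- The interior boundary of a finite region: the sites of the region at distance 1
from its complement. -/
def intBoundary {V : Type*} (d : V → V → ℕ) (Λ : Finset V) : Set V :=
  {l | l ∈ Λ ∧ ∃ m : V, m ∉ Λ ∧ d l m = 1}

theorem stmt_10 {V G : Type*} (d : V → V → ℕ)
    (L : G → Set V)            -- the ground states
    (cell : G → V → Set V)     -- reference Voronoi cells
    (v : G → V → ℝ)            -- weights
    (μ ρmax : ℝ) (hμ : 0 < μ)
    -- μ is a uniform lower bound on the weights
    (hwlb : ∀ (g : G) (l : V), μ ≤ v g l)
    -- the reference cells cover with weights summing to 1 at each site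
    (hcover : ∀ (g : G) (l : V), (({x | x ∈ L g ∧ l ∈ cell g x}).ncard : ℝ) * v g l = 1)
    -- the weights over any reference cell sum to ρmax⁻¹
    (hcellsum : ∀ g : G, ∀ x ∈ L g, (∑ᶠ l ∈ cell g x, v g l) = ρmax⁻¹)
    (hself : ∀ g : G, ∀ x ∈ L g, x ∈ cell g x)
    (hcellfin : ∀ (g : G) (x : V), (cell g x).Finite)
    -- cells are connected: a cell meeting both a region and its complement meets the
    -- interior boundary of the region
    (hconn : ∀ (g : G) (x : V) (Λ : Finset V), (cell g x ∩ ↑Λ).Nonempty →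
      (cell g x ∩ (↑Λ : Set V)ᶜ).Nonempty → (cell g x ∩ intBoundary d Λ).Nonempty)
    (Λ : Finset V) (hbdfin : (intBoundary d Λ).Finite) :
    (∀ g : G,
      |((↑Λ ∩ L g : Set V).ncard : ℝ) - ρmax * (Λ.card : ℝ)|
        ≤ μ⁻¹ * ((intBoundary d Λ).ncard : ℝ)) ∧
    (∀ g g' : G,
      |((↑Λ ∩ L g : Set V).ncard : ℝ) - ((↑Λ ∩ L g' : Set V).ncard : ℝ)|
        ≤ 2 * μ⁻¹ * ((intBoundary d Λ).ncard : ℝ)) := by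
  classical
  have hv : ∀ (g : G) (b : V), 0 < v g b := fun g b => hμ.trans_le (hwlb g b)
  have hvnn : ∀ (g : G) (b : V), 0 ≤ v g b := fun g b => (hv g b).le
  have hfibfin : ∀ (g : G) (b : V), {x | x ∈ L g ∧ b ∈ cell g x}.Finite := by
    intro g b
    by_contra h
    have h2 := hcover g b
    rw [Set.Infinite.ncard h] at h2
    norm_num at h2
  have hbd0 : (0:ℝ) ≤ μ⁻¹ * ((intBoundary d Λ).ncard : ℝ) := by positivity
  have hDcard : ((intBoundary d Λ).ncard : ℝ) = (hbdfin.toFinset.card : ℝ) := by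
    norm_cast
    exact Set.ncard_eq_toFinset_card _ hbdfin
  have key : ∀ g : G,
      |((↑Λ ∩ L g : Set V).ncard : ℝ) - ρmax * (Λ.card : ℝ)|
        ≤ μ⁻¹ * ((intBoundary d Λ).ncard : ℝ) := by
    intro g
    rcases Λ.eq_empty_or_nonempty with rfl | ⟨l0, hl0⟩
    · simpa using hbd0
    -- notation
    set D : Finset V := hbdfin.toFinset with hDdef
    set F : V → Finset V := fun b => (hfibfin g b).toFinset with hFdef
    have hmemF : ∀ b x, x ∈ F b ↔ x ∈ L g ∧ b ∈ cell g x := by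
      intro b x; simp [hFdef]
    have hFcard : ∀ b, ((F b).card : ℝ) * v g b = 1 := by
      intro b
      have h2 := hcover g b
      rwa [Set.ncard_eq_toFinset_card _ (hfibfin g b)] at h2
    have hFcardle : ∀ b, ((F b).card : ℝ) ≤ μ⁻¹ := by
      intro b
      have h1 : ((F b).card : ℝ) = (v g b)⁻¹ :=
        eq_inv_of_mul_eq_one_left (hFcard b)
      rw [h1]
      exact inv_anti₀ hμ (hwlb g b)
    set Cx : V → Finset V := fun x => (hcellfin g x).toFinset with hCxdef
    have hmemCx : ∀ x b, b ∈ Cx x ↔ b ∈ cell g x := by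
      intro x b; simp [hCxdef]
    have hCxsum : ∀ x ∈ L g, (∑ b ∈ Cx x, v g b) = ρmax⁻¹ := by
      intro x hx
      rw [← hcellsum g x hx, finsum_mem_eq_finite_toFinset_sum _ (hcellfin g x)]
    -- ρmax is positive
    have hfib0 : (F l0).Nonempty := by
      rw [Finset.nonempty_iff_ne_empty]
      intro h
      have h2 := hFcard l0
      rw [h] at h2; norm_num at h2
    obtain ⟨x0, hx0⟩ := hfib0
    have hx0L : x0 ∈ L g := ((hmemF l0 x0).mp hx0).1
    have hρinv : μ ≤ ρmax⁻¹ := by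
      rw [← hCxsum x0 hx0L]
      calc μ ≤ v g x0 := hwlb g x0
        _ ≤ ∑ b ∈ Cx x0, v g b :=
          Finset.single_le_sum (fun b _ => hvnn g b)
            ((hmemCx x0 x0).mpr (hself g x0 hx0L))
    have hρinvpos : 0 < ρmax⁻¹ := hμ.trans_le hρinv
    have hρpos : 0 < ρmax := inv_pos.mp hρinvpos
    -- the finset of particles in Λ
    set A : Finset V := Λ.filter (· ∈ L g) with hAdef
    have hAcard : ((↑Λ ∩ L g : Set V).ncard : ℝ) = (A.card : ℝ) := by
      have : (↑Λ ∩ L g : Set V) = ↑A := by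
        ext x; simp [hAdef, and_comm]
      rw [this, Set.ncard_coe_finset]
    have hmemA : ∀ x, x ∈ A ↔ x ∈ Λ ∧ x ∈ L g := by
      intro x; simp [hAdef]
    -- the crossing cells
    set CC : Finset V := D.biUnion F with hCCdef
    have hCC : ∀ x, x ∈ L g → (cell g x ∩ ↑Λ).Nonempty →
        (cell g x ∩ (↑Λ : Set V)ᶜ).Nonempty → x ∈ CC := by
      intro x hx h1 h2
      obtain ⟨b, hb1, hb2⟩ := hconn g x Λ h1 h2
      rw [hCCdef, Finset.mem_biUnion]
      exact ⟨b, hbdfin.mem_toFinset.mpr hb2, (hmemF b x).mpr ⟨hx, hb1⟩⟩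
    have hCCcard : (CC.card : ℝ) ≤ μ⁻¹ * (D.card : ℝ) := by
      calc (CC.card : ℝ) ≤ ((∑ b ∈ D, (F b).card : ℕ) : ℝ) := by
            exact_mod_cast Finset.card_biUnion_le
        _ = ∑ b ∈ D, ((F b).card : ℝ) := by push_cast; ring
        _ ≤ ∑ _b ∈ D, μ⁻¹ := Finset.sum_le_sum (fun b _ => hFcardle b)
        _ = μ⁻¹ * (D.card : ℝ) := by rw [Finset.sum_const, nsmul_eq_mul]; ring
    -- the three sums
    set T : ℝ := ∑ x ∈ A, ∑ b ∈ Cx x ∩ Λ, v g b with hTdef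
    set E2 : ℝ := ∑ x ∈ A, ∑ b ∈ Cx x \ Λ, v g b with hE2def
    set E1 : ℝ := ∑ b ∈ Λ, ∑ x ∈ F b \ Λ, v g b with hE1def
    -- identity 1 : A.card * ρmax⁻¹ = T + E2
    have hid1 : (A.card : ℝ) * ρmax⁻¹ = T + E2 := by
      have : ∀ x ∈ A, (∑ b ∈ Cx x ∩ Λ, v g b) + (∑ b ∈ Cx x \ Λ, v g b) = ρmax⁻¹ := by
        intro x hx
        rw [Finset.sum_inter_add_sum_sdiff]
        exact hCxsum x ((hmemA x).mp hx).2
      rw [hTdef, hE2def, ← Finset.sum_add_distrib, Finset.sum_congr rfl this,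
        Finset.sum_const, nsmul_eq_mul]
    -- identity 2 : Λ.card = T + E1
    have hswap : (∑ b ∈ Λ, ∑ x ∈ F b ∩ Λ, v g b) = T := by
      have h1 : ∀ b, F b ∩ Λ = A.filter (fun x => b ∈ cell g x) := by
        intro b
        ext x
        simp only [Finset.mem_inter, hmemF, Finset.mem_filter, hmemA]
        tauto
      calc (∑ b ∈ Λ, ∑ x ∈ F b ∩ Λ, v g b)
          = ∑ b ∈ Λ, ∑ x ∈ A, if b ∈ cell g x then v g b else 0 := by
            refine Finset.sum_congr rfl fun b _ => ?_
            rw [h1 b, Finset.sum_filter]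
        _ = ∑ x ∈ A, ∑ b ∈ Λ, if b ∈ cell g x then v g b else 0 := Finset.sum_comm
        _ = T := by
            refine Finset.sum_congr rfl fun x _ => ?_
            rw [← Finset.sum_filter]
            congr 1
            ext b
            simp [hmemCx, and_comm]
    have hid2 : (Λ.card : ℝ) = T + E1 := by
      calc (Λ.card : ℝ) = ∑ _b ∈ Λ, (1:ℝ) := by
            rw [Finset.sum_const, nsmul_eq_mul]; ring
        _ = ∑ b ∈ Λ, ((∑ x ∈ F b ∩ Λ, v g b) + ∑ x ∈ F b \ Λ, v g b) := by
            refine Finset.sum_congr rfl fun b _ => ?_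
            rw [Finset.sum_inter_add_sum_sdiff, Finset.sum_const, nsmul_eq_mul, ← hFcard b]
        _ = T + E1 := by
            rw [Finset.sum_add_distrib, hswap, hE1def]
    -- bounds on E2 and E1
    have hE2nn : 0 ≤ E2 :=
      Finset.sum_nonneg fun x _ => Finset.sum_nonneg fun b _ => hvnn g b
    have hE1nn : 0 ≤ E1 :=
      Finset.sum_nonneg fun b _ => Finset.sum_nonneg fun x _ => hvnn g b
    have hsubsum : ∀ x ∈ L g, ∀ s : Finset V, s ⊆ Cx x → (∑ b ∈ s, v g b) ≤ ρmax⁻¹ := by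
      intro x hx s hs
      rw [← hCxsum x hx]
      exact Finset.sum_le_sum_of_subset_of_nonneg hs fun b _ _ => hvnn g b
    have hE2le : E2 ≤ (CC.card : ℝ) * ρmax⁻¹ := by
      have hzero : ∀ x ∈ A, x ∉ CC → (∑ b ∈ Cx x \ Λ, v g b) = 0 := by
        intro x hx hxcc
        rcases (Cx x \ Λ).eq_empty_or_nonempty with he | ⟨b, hb⟩
        · rw [he, Finset.sum_empty]
        · exfalso
          apply hxcc
          obtain ⟨hxΛ, hxL⟩ := (hmemA x).mp hx
          refine hCC x hxL ⟨x, hself g x hxL, hxΛ⟩ ?_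
          rw [Finset.mem_sdiff] at hb
          exact ⟨b, (hmemCx x b).mp hb.1, hb.2⟩
      calc E2 = ∑ x ∈ A.filter (· ∈ CC), ∑ b ∈ Cx x \ Λ, v g b := by
            rw [hE2def]
            refine (Finset.sum_filter_of_ne ?_).symm
            intro x hx hne
            by_contra hxcc
            exact hne (hzero x hx hxcc)
        _ ≤ ∑ _x ∈ A.filter (· ∈ CC), ρmax⁻¹ := by
            refine Finset.sum_le_sum fun x hx => ?_
            exact hsubsum x ((hmemA x).mp (Finset.mem_filter.mp hx).1).2 _
              Finset.sdiff_subset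
        _ = ((A.filter (· ∈ CC)).card : ℝ) * ρmax⁻¹ := by
            rw [Finset.sum_const, nsmul_eq_mul]
        _ ≤ (CC.card : ℝ) * ρmax⁻¹ := by
            have : (A.filter (· ∈ CC)).card ≤ CC.card :=
              Finset.card_le_card fun x hx => (Finset.mem_filter.mp hx).2
            exact mul_le_mul_of_nonneg_right (by exact_mod_cast this) hρinvpos.le
    have hE1le : E1 ≤ (CC.card : ℝ) * ρmax⁻¹ := by
      have hsub : ∀ b ∈ Λ, F b \ Λ ⊆ CC \ Λ := by
        intro b hb x hx
        rw [Finset.mem_sdiff] at hx ⊢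
        obtain ⟨hxF, hxΛ⟩ := hx
        obtain ⟨hxL, hbc⟩ := (hmemF b x).mp hxF
        refine ⟨hCC x hxL ⟨b, hbc, hb⟩ ⟨x, hself g x hxL, hxΛ⟩, hxΛ⟩
      have hfilter : ∀ b ∈ Λ, F b \ Λ = (CC \ Λ).filter (· ∈ F b) := by
        intro b hb
        ext x
        simp only [Finset.mem_filter, Finset.mem_sdiff]
        constructor
        · intro hx
          have := hsub b hb (Finset.mem_sdiff.mpr hx)
          rw [Finset.mem_sdiff] at this
          exact ⟨this, hx.1⟩
        · rintro ⟨⟨_, h2⟩, h3⟩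
          exact ⟨h3, h2⟩
      calc E1 = ∑ b ∈ Λ, ∑ x ∈ CC \ Λ, if x ∈ F b then v g b else 0 := by
            rw [hE1def]
            refine Finset.sum_congr rfl fun b hb => ?_
            rw [hfilter b hb, Finset.sum_filter]
        _ = ∑ x ∈ CC \ Λ, ∑ b ∈ Λ, if x ∈ F b then v g b else 0 := Finset.sum_comm
        _ ≤ ∑ _x ∈ CC \ Λ, ρmax⁻¹ := by
            refine Finset.sum_le_sum fun x hx => ?_
            rw [← Finset.sum_filter]
            rcases Classical.em (x ∈ L g) with hxL | hxL
            · refine hsubsum x hxL _ fun b hb => ?_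
              rw [Finset.mem_filter] at hb
              exact (hmemCx x b).mpr ((hmemF b x).mp hb.2).2
            · have : Λ.filter (fun b => x ∈ F b) = ∅ := by
                refine Finset.filter_false_of_mem fun b _ => ?_
                intro hxF
                exact hxL ((hmemF b x).mp hxF).1
              rw [this, Finset.sum_empty]
              exact hρinvpos.le
        _ = ((CC \ Λ).card : ℝ) * ρmax⁻¹ := by rw [Finset.sum_const, nsmul_eq_mul]
        _ ≤ (CC.card : ℝ) * ρmax⁻¹ := by
            have : (CC \ Λ).card ≤ CC.card := Finset.card_le_card Finset.sdiff_subset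
            exact mul_le_mul_of_nonneg_right (by exact_mod_cast this) hρinvpos.le
    -- put it together
    have hmain : |(A.card : ℝ) * ρmax⁻¹ - (Λ.card : ℝ)| ≤ (CC.card : ℝ) * ρmax⁻¹ := by
      have : (A.card : ℝ) * ρmax⁻¹ - (Λ.card : ℝ) = E2 - E1 := by
        rw [hid1, hid2]; ring
      rw [this, abs_sub_le_iff]
      constructor <;> linarith
    have hρne : ρmax ≠ 0 := hρpos.ne'
    have heq : (A.card : ℝ) - ρmax * (Λ.card : ℝ)
        = ρmax * ((A.card : ℝ) * ρmax⁻¹ - (Λ.card : ℝ)) := by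
      field_simp
    calc |((↑Λ ∩ L g : Set V).ncard : ℝ) - ρmax * (Λ.card : ℝ)|
        = ρmax * |(A.card : ℝ) * ρmax⁻¹ - (Λ.card : ℝ)| := by
          rw [hAcard, heq, abs_mul, abs_of_pos hρpos]
      _ ≤ ρmax * ((CC.card : ℝ) * ρmax⁻¹) := by
          exact mul_le_mul_of_nonneg_left hmain hρpos.le
      _ = (CC.card : ℝ) := by field_simp
      _ ≤ μ⁻¹ * (D.card : ℝ) := hCCcard
      _ = μ⁻¹ * ((intBoundary d Λ).ncard : ℝ) := by rw [hDcard]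
  refine ⟨key, fun g g' => ?_⟩
  calc |((↑Λ ∩ L g : Set V).ncard : ℝ) - ((↑Λ ∩ L g' : Set V).ncard : ℝ)|
      ≤ |((↑Λ ∩ L g : Set V).ncard : ℝ) - ρmax * (Λ.card : ℝ)|
        + |ρmax * (Λ.card : ℝ) - ((↑Λ ∩ L g' : Set V).ncard : ℝ)| := abs_sub_le _ _ _
    _ ≤ μ⁻¹ * ((intBoundary d Λ).ncard : ℝ) + μ⁻¹ * ((intBoundary d Λ).ncard : ℝ) := by
        refine add_le_add (key g) ?_
        rw [abs_sub_comm]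
        exact key g'
    _ = 2 * μ⁻¹ * ((intBoundary d Λ).ncard : ℝ) := by ring
end

section
/- In the hard-disk model of radius 5/2 on Z^2, any single particle not overlapping the particle at the origin can cover at most 3 of the 16 sites adjacent to \sigma_0, and it covers exactly 3 such sites only when its center is at one of (0,5), (0,-5), (5,0), (-5,0). -/
/-- The support of the hard disk of radius 5/2 centered at the origin:
integer points strictly inside the disk of radius 5/2. -/
def disk : Set (ℤ × ℤ) := {p | 4 * (p.1 ^ 2 + p.2 ^ 2) < 25}

/-- The sites at graph distance 1 from the disk at the origin. -/
def adjDisk : Set (ℤ × ℤ) :=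
  {p | p ∉ disk ∧ ∃ q ∈ disk, (p.1 - q.1).natAbs + (p.2 - q.2).natAbs = 1}

/-- The support of the disk particle centered at `y`. -/
def diskAt (y : ℤ × ℤ) : Set (ℤ × ℤ) := {p | (p.1 - y.1, p.2 - y.2) ∈ disk}

/-- Explicit list of the 21 sites of the disk. -/
def D : Finset (ℤ × ℤ) :=
  {(0,0),(1,0),(-1,0),(0,1),(0,-1),(1,1),(1,-1),(-1,1),(-1,-1),(2,0),(-2,0),
   (0,2),(0,-2),(2,1),(2,-1),(-2,1),(-2,-1),(1,2),(1,-2),(-1,2),(-1,-2)}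

/-- Explicit list of the 16 adjacent sites. -/
def F : Finset (ℤ × ℤ) :=
  {(3,0),(3,1),(3,-1),(-3,0),(-3,1),(-3,-1),(0,3),(1,3),(-1,3),(0,-3),
   (1,-3),(-1,-3),(2,2),(2,-2),(-2,2),(-2,-2)}

/-- Possible differences of two disk sites. -/
def Dsub : Finset (ℤ × ℤ) :=
  (D ×ˢ D).image fun q => (q.1.1 - q.2.1, q.1.2 - q.2.2)

lemma mem_disk (p : ℤ × ℤ) : p ∈ disk ↔ p.1 ^ 2 + p.2 ^ 2 ≤ 6 := by
  obtain ⟨a, b⟩ := p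
  simp only [disk, Set.mem_setOf_eq]
  generalize a ^ 2 + b ^ 2 = t
  omega

lemma disk_D : ∀ q ∈ D, q ∈ disk := by
  intro q hq
  rw [mem_disk]
  fin_cases hq <;> decide

lemma F_adj : ∀ p ∈ F, ∃ q ∈ D, (p.1 - q.1).natAbs + (p.2 - q.2).natAbs = 1 := by
  decide

lemma adjDisk_eq : adjDisk = ↑F := by
  ext ⟨a, b⟩
  simp only [adjDisk, Set.mem_setOf_eq]
  constructor
  · rintro ⟨h1, q, hq, hd⟩
    rw [mem_disk] at h1 hq
    obtain ⟨q1, q2⟩ := q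
    simp only at h1 hq hd
    have hb1 : -2 ≤ q1 ∧ q1 ≤ 2 := by constructor <;> nlinarith
    have hb2 : -2 ≤ q2 ∧ q2 ≤ 2 := by constructor <;> nlinarith
    have h4 : (a = q1 + 1 ∧ b = q2) ∨ (a = q1 - 1 ∧ b = q2) ∨
        (a = q1 ∧ b = q2 + 1) ∨ (a = q1 ∧ b = q2 - 1) := by omega
    rw [Finset.mem_coe]
    obtain ⟨h1b, h2b⟩ := hb1
    obtain ⟨h3b, h4b⟩ := hb2
    rcases h4 with ⟨ha, hb⟩ | ⟨ha, hb⟩ | ⟨ha, hb⟩ | ⟨ha, hb⟩ <;> rw [ha, hb] at h1 ⊢ <;>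
      interval_cases q1 <;> interval_cases q2 <;> first | decide | (exfalso; revert hq h1; decide)
  · intro h
    rw [Finset.mem_coe] at h
    refine ⟨?_, ?_⟩
    · rw [mem_disk]
      fin_cases h <;> decide
    · obtain ⟨q, hq, hd⟩ := F_adj _ h
      exact ⟨q, disk_D q hq, hd⟩

set_option maxRecDepth 10000 in
lemma key_sub : ∀ p ∈ Finset.Icc ((-4 : ℤ), (-4 : ℤ)) (4, 4),
    p.1 ^ 2 + p.2 ^ 2 ≤ 24 → p ∈ Dsub := by
  decide

lemma F_bounds : ∀ p ∈ F, -3 ≤ p.1 ∧ p.1 ≤ 3 ∧ -3 ≤ p.2 ∧ p.2 ≤ 3 := by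
  decide

theorem stmt_19 (y : ℤ × ℤ) (hy : Disjoint (diskAt y) disk) :
    (adjDisk ∩ diskAt y).ncard ≤ 3 ∧
    ((adjDisk ∩ diskAt y).ncard = 3 →
      y ∈ ({(0, 5), (0, -5), (5, 0), (-5, 0)} : Set (ℤ × ℤ))) := by
  obtain ⟨y1, y2⟩ := y
  have h25 : 25 ≤ y1 ^ 2 + y2 ^ 2 := by
    by_contra h
    push_neg at h
    have h24 : y1 ^ 2 + y2 ^ 2 ≤ 24 := by omega
    have hmem : ((y1, y2) : ℤ × ℤ) ∈ Dsub := by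
      refine key_sub _ ?_ h24
      have hb1 : -4 ≤ y1 ∧ y1 ≤ 4 := by constructor <;> nlinarith
      have hb2 : -4 ≤ y2 ∧ y2 ≤ 4 := by constructor <;> nlinarith
      simp only [Finset.mem_Icc, Prod.mk_le_mk]
      exact ⟨⟨hb1.1, hb2.1⟩, ⟨hb1.2, hb2.2⟩⟩
    simp only [Dsub, Finset.mem_image, Finset.mem_product, Prod.mk.injEq] at hmem
    obtain ⟨⟨d, e⟩, ⟨hd, he⟩, h1, h2⟩ := hmem
    have hd1 : d ∈ diskAt (y1, y2) := by
      show (d.1 - y1, d.2 - y2) ∈ disk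
      rw [← h1, ← h2]
      simpa using disk_D e he
    exact Set.disjoint_left.mp hy hd1 (disk_D d hd)
  have hS : adjDisk ∩ diskAt (y1, y2) =
      ↑(F.filter fun p => (p.1 - y1) ^ 2 + (p.2 - y2) ^ 2 ≤ 6) := by
    ext p
    simp only [Set.mem_inter_iff, adjDisk_eq, Finset.coe_filter, Set.mem_setOf_eq,
      Finset.mem_coe, diskAt, mem_disk]
    try tauto
  rw [hS, Set.ncard_coe_finset]
  rcases Finset.eq_empty_or_nonempty (F.filter fun p => (p.1 - y1) ^ 2 + (p.2 - y2) ^ 2 ≤ 6)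
    with hF | ⟨p, hp⟩
  · rw [hF]
    simp
  · rw [Finset.mem_filter] at hp
    obtain ⟨hpF, hpd⟩ := hp
    obtain ⟨hb1, hb2, hb3, hb4⟩ := F_bounds p hpF
    have h6a : (p.1 - y1) ^ 2 ≤ 6 := by nlinarith [sq_nonneg (p.2 - y2)]
    have h6b : (p.2 - y2) ^ 2 ≤ 6 := by nlinarith [sq_nonneg (p.1 - y1)]
    have hy1 : -5 ≤ y1 ∧ y1 ≤ 5 := by constructor <;> nlinarith
    have hy2 : -5 ≤ y2 ∧ y2 ≤ 5 := by constructor <;> nlinarith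
    obtain ⟨hy1a, hy1b⟩ := hy1
    obtain ⟨hy2a, hy2b⟩ := hy2
    clear hpd h6a h6b hpF hb1 hb2 hb3 hb4 hy
    interval_cases y1 <;> interval_cases y2 <;>
      first
        | (exfalso; revert h25; decide)
        | (refine ⟨by decide, fun hc => ?_⟩;
            first
              | exact absurd hc (by decide)
              | simp)
end
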